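/- Let B ⊆ A be rings, α an automorphism of A and β an automorphism of B. If A is finitely generated projective as a left B-module and there is an (A,B)-bimodule isomorphism A ≅ Hom_B(_β A_α, B) (where _β A_α denotes A viewed as a (B,A)-bimodule with left B-action b·a = β(b)a and right A-action a·a' = a α(a')), then A is finitely generated projective as a right B-module. -/

import Mathlib

/-!
A finite dual basis `(xᵢ, fᵢ)` of the left `B`-module `A` transports along the pairing `Φ`:
each `β⁻¹ ∘ fᵢ` is left `B`-linear for the twisted action, hence equals `Φ cᵢ` for some
`cᵢ ∈ A`. Expanding `y = ∑ β (Φ cᵢ y) xᵢ` inside `Φ a` and using the right `B`-linearity of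
`Φ` in its first argument gives `Φ a = Φ (∑ cᵢ Φ a xᵢ)`, so by injectivity
`a = ∑ cᵢ Φ a xᵢ`. This is a dual basis of `A` as a right `B`-module.
-/

open MulOpposite

namespace Module

variable {R M : Type*} [Semiring R] [AddCommMonoid M] [Module R M]

variable (R M) in
theorem exists_dual_basis_of_finite_projective [Module.Finite R M] [Projective R M] :
    ∃ (n : ℕ) (x : Fin n → M) (f : Fin n → M →ₗ[R] R), ∀ m, ∑ i, f i m • x i = m := by
  obtain ⟨n, p, s, -, -, hps⟩ := Finite.exists_comp_eq_id_of_projective R M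
  refine ⟨n, fun i ↦ p (Pi.single i 1), fun i ↦ LinearMap.proj i ∘ₗ s, fun m ↦ ?_⟩
  calc ∑ i, s m i • p (Pi.single i 1) = p (∑ i, Pi.single i (s m i)) := by
        simp only [← map_smul, ← Pi.single_smul, smul_eq_mul, mul_one, map_sum]
    _ = m := by rw [Finset.univ_sum_single, ← LinearMap.comp_apply, hps, LinearMap.id_apply]

theorem finite_projective_of_dual_basis {ι : Type*} [Fintype ι] (x : ι → M)
    (f : ι → M →ₗ[R] R) (h : ∀ m, ∑ i, f i m • x i = m) :
    Module.Finite R M ∧ Projective R M := by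
  have hsplit : Fintype.linearCombination R x ∘ₗ LinearMap.pi f = LinearMap.id :=
    LinearMap.ext fun m ↦ by simpa [Fintype.linearCombination_apply] using h m
  exact ⟨.of_surjective (Fintype.linearCombination R x) fun m ↦ ⟨_, LinearMap.congr_fun hsplit m⟩,
    .of_split _ _ hsplit⟩

end Module

namespace Subring

variable {A : Type*} [Ring A] {B : Subring A}

def opLinearMapOfMulRight (g : A →+ B) (hg : ∀ a (b : B), g (a * b) = g a * b) :
    Aᵐᵒᵖ →ₗ[B.op] B.op where
  toFun m := ⟨op (g m.unop), (g m.unop).2⟩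
  map_add' m m' := by ext; simp
  map_smul' b m := by
    ext
    exact congrArg (op ∘ Subtype.val) (hg m.unop ⟨b.1.unop, b.2⟩)

theorem finite_projective_op_of_right_dual_basis {ι : Type*} [Fintype ι] (c : ι → A)
    (g : ι → A →+ B) (hg : ∀ i a (b : B), g i (a * b) = g i a * b)
    (h : ∀ a, ∑ i, c i * g i a = a) :
    Module.Finite B.op Aᵐᵒᵖ ∧ Module.Projective B.op Aᵐᵒᵖ := by
  refine Module.finite_projective_of_dual_basis (fun i ↦ op (c i))
    (fun i ↦ opLinearMapOfMulRight (g i) (hg i)) fun m ↦ ?_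
  change ∑ i, op ((g i m.unop : B) : A) * op (c i) = m
  simp_rw [← op_mul]
  rw [← Finset.op_sum, h, MulOpposite.op_unop]

end Subring

section TwistedPairing

variable {A : Type*} [Ring A] {B : Subring A} {β : B ≃+* B} {Φ : A →+ A →+ B}

theorem exists_eq_map_pairing
    (hΦsurj : ∀ f : A →+ B, (∀ (b : B) (x : A), f ((β b : A) * x) = b * f x) →
      ∃ a : A, ∀ x : A, f x = Φ a x)
    (f : A →ₗ[B] B) : ∃ c : A, ∀ y, f y = β (Φ c y) := by
  obtain ⟨c, hc⟩ := hΦsurj ((β.symm : B →+ B).comp f.toAddMonoidHom) fun b y ↦ by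
    simpa [Subring.smul_def] using congrArg β.symm (f.map_smul (β b) y)
  exact ⟨c, fun y ↦ by rw [← hc]; simp⟩

theorem sum_mul_pairing_eq_self
    (hΦBlin : ∀ (a : A) (b : B) (x : A), Φ a ((β b : A) * x) = b * Φ a x)
    (hΦB : ∀ (a : A) (b : B) (x : A), Φ (a * (b : A)) x = Φ a x * b)
    (hΦinj : ∀ a : A, (∀ x : A, Φ a x = 0) → a = 0)
    {ι : Type*} [Fintype ι] (x c : ι → A) (hdual : ∀ y, ∑ i, (β (Φ (c i) y) : A) * x i = y)
    (a : A) : ∑ i, c i * Φ a (x i) = a := by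
  refine sub_eq_zero.mp (hΦinj _ fun y ↦ ?_)
  have hsum : Φ (∑ i, c i * Φ a (x i)) y = ∑ i, Φ (c i) y * Φ a (x i) := by
    simp [map_sum, hΦB]
  have hexpand : Φ a y = ∑ i, Φ (c i) y * Φ a (x i) := by
    conv_lhs => rw [← hdual y]
    simp [map_sum, hΦBlin]
  rw [map_sub, AddMonoidHom.sub_apply, hsum, hexpand, sub_self]

end TwistedPairing

theorem finite_projective_right_of_twisted_frobenius
    {A : Type u} [Ring A] (B : Subring A) (β : B ≃+* B)
    (hfin : Module.Finite B A) (hproj : Module.Projective B A)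
    (Φ : A → A →+ B)
    (hΦadd : ∀ a a' : A, Φ (a + a') = Φ a + Φ a')
    (hΦBlin : ∀ (a : A) (b : B) (x : A), Φ a ((β b : A) * x) = b * Φ a x)
    (hΦB : ∀ (a : A) (b : B) (x : A), Φ (a * (b : A)) x = Φ a x * b)
    (hΦinj : ∀ a : A, (∀ x : A, Φ a x = 0) → a = 0)
    (hΦsurj : ∀ f : A →+ B, (∀ (b : B) (x : A), f ((β b : A) * x) = b * f x) →
      ∃ a : A, ∀ x : A, f x = Φ a x) :
    Module.Finite B.op Aᵐᵒᵖ ∧ Module.Projective B.op Aᵐᵒᵖ := by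
  let Ψ : A →+ A →+ B := AddMonoidHom.mk' Φ hΦadd
  obtain ⟨_, x, f, hdual⟩ := Module.exists_dual_basis_of_finite_projective B A
  choose c hc using fun i ↦ exists_eq_map_pairing (Φ := Ψ) hΦsurj (f i)
  have hdual' : ∀ y, ∑ i, (β (Ψ (c i) y) : A) * x i = y := fun y ↦ by
    simpa only [Subring.smul_def, smul_eq_mul, hc] using hdual y
  exact Subring.finite_projective_op_of_right_dual_basis c (fun i ↦ Ψ.flip (x i))
    (fun i a b ↦ hΦB a b (x i)) (sum_mul_pairing_eq_self hΦBlin hΦB hΦinj x c hdual')
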